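/- For 0 < γ < 1, integers N ≥ 2 and 1 ≤ i ≤ 2N-1 (with i ≥ 2), one has 4((i/2)^{3-γ} - (i/2 - 1)^{3-γ}) - (3-γ)(3(i/2)^{2-γ} + (i/2-1)^{2-γ}) + (3-γ)(2-γ)(i/2)^{1-γ} ≥ (1/6)(3-γ)(2-γ)(1-γ)²(i/2)^{-γ}. -/

import Mathlib

/-!
With `φ₀(s) = (1 - s)(1 - 2s)` and `c = (3 - γ)(2 - γ)(1 - γ)`, the right-hand side at `x > 1`
is `c ∫₀¹ φ₀(s) (x - s)^(-γ) ds` (an explicit antiderivative). For the lower bound, the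
polynomial `u = basisPrimitive γ` has `u(1) = 0`, `u(0) = (γ - 1)/6` and
`u' = φ₀ - γ s(1 - s)`, so `Φ(s) = u(s) (x - s)^(-γ)` satisfies `Φ' ≤ φ₀ (x - s)^(-γ)`
exactly when `u(s) ≤ s(1 - s)(x - s)`, which holds for `γ ≤ 1 ≤ x`. Integrating gives
`∫₀¹ φ₀(s) (x - s)^(-γ) ds ≥ Φ(1) - Φ(0) = (1 - γ) x^(-γ) / 6`.
The case `x = 1` (`i = 2`) is a direct evaluation.
-/

open Real intervalIntegral

noncomputable def basisKernelMoment (γ x : ℝ) : ℝ :=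
  4 * (x ^ (3 - γ) - (x - 1) ^ (3 - γ)) - (3 - γ) * (3 * x ^ (2 - γ) + (x - 1) ^ (2 - γ))
    + (3 - γ) * (2 - γ) * x ^ (1 - γ)

noncomputable def basisPrimitive (γ s : ℝ) : ℝ :=
  (1 - s) ^ 2 * (4 * s - 1 + γ * (1 + 2 * s)) / 6

lemma hasDerivAt_sub_rpow {x t : ℝ} (a : ℝ) (ht : t < x) :
    HasDerivAt (fun s => (x - s) ^ a) (-(a * (x - t) ^ (a - 1))) t := by
  have h := ((hasDerivAt_id t).const_sub x).rpow_const (p := a) (Or.inl (sub_pos.2 ht).ne')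
  simp only [id] at h
  convert h using 1
  ring

lemma lt_of_mem_uIcc_zero_one {x s : ℝ} (hx : 1 < x) (hs : s ∈ Set.uIcc 0 1) : s < x := by
  rw [Set.uIcc_of_le zero_le_one] at hs
  exact hs.2.trans_lt hx

lemma continuousOn_sub_rpow {x : ℝ} (a : ℝ) (hx : 1 < x) :
    ContinuousOn (fun s => (x - s) ^ a) (Set.uIcc 0 1) := fun _ hs =>
  (hasDerivAt_sub_rpow a (lt_of_mem_uIcc_zero_one hx hs)).continuousAt.continuousWithinAt

lemma intervalIntegrable_basis_mul_sub_rpow (γ : ℝ) {x : ℝ} (hx : 1 < x) :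
    IntervalIntegrable (fun s => (1 - s) * (1 - 2 * s) * (x - s) ^ (-γ))
      MeasureTheory.volume 0 1 :=
  have := continuousOn_sub_rpow (-γ) hx
  ContinuousOn.intervalIntegrable (by fun_prop)

lemma rpow_sub_eq_mul_rpow_neg {b : ℝ} (hb : 0 < b) (k γ : ℝ) :
    b ^ (k - γ) = b ^ k * b ^ (-γ) := by
  rw [sub_eq_add_neg, rpow_add hb]

lemma integral_basis_mul_sub_rpow (γ : ℝ) {x : ℝ} (hx : 1 < x) :
    (3 - γ) * (2 - γ) * (1 - γ) * ∫ s in (0:ℝ)..1, (1 - s) * (1 - 2 * s) * (x - s) ^ (-γ)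
      = basisKernelMoment γ x := by
  -- the antiderivative rests on `2 (x - t)² - (4x - 3)(x - t) + (x - 1)(2x - 1) = (1 - t)(1 - 2t)`
  have hF : ∀ t ∈ Set.uIcc (0:ℝ) 1, HasDerivAt
      (fun t => -2 * (2 - γ) * (1 - γ) * (x - t) ^ (3 - γ)
        + (4 * x - 3) * (3 - γ) * (1 - γ) * (x - t) ^ (2 - γ)
        - (x - 1) * (2 * x - 1) * (3 - γ) * (2 - γ) * (x - t) ^ (1 - γ))
      ((3 - γ) * (2 - γ) * (1 - γ) * ((1 - t) * (1 - 2 * t) * (x - t) ^ (-γ))) t := by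
    intro t ht
    have hxt := lt_of_mem_uIcc_zero_one hx ht
    have hd := @hasDerivAt_sub_rpow x t
    refine ((((hd (3 - γ) hxt).const_mul _).add ((hd (2 - γ) hxt).const_mul _)).sub
      ((hd (1 - γ) hxt).const_mul _)).congr_deriv ?_
    have hpos : 0 < x - t := sub_pos.2 hxt
    rw [show (3:ℝ) - γ - 1 = 2 - γ by ring, show (2:ℝ) - γ - 1 = 1 - γ by ring,
      show (1:ℝ) - γ - 1 = -γ by ring, rpow_sub_eq_mul_rpow_neg hpos,
      rpow_sub_eq_mul_rpow_neg hpos, rpow_two, rpow_one]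
    ring
  rw [← integral_const_mul, integral_eq_sub_of_hasDerivAt hF
    ((intervalIntegrable_basis_mul_sub_rpow γ hx).const_mul _)]
  have hx0 : 0 < x := by linarith
  have hx1 : 0 < x - 1 := by linarith
  simp only [sub_zero, basisKernelMoment]
  rw [rpow_sub_eq_mul_rpow_neg hx0, rpow_sub_eq_mul_rpow_neg hx0, rpow_sub_eq_mul_rpow_neg hx0,
    rpow_sub_eq_mul_rpow_neg hx1, rpow_sub_eq_mul_rpow_neg hx1, rpow_sub_eq_mul_rpow_neg hx1]
  simp only [rpow_one, rpow_ofNat]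
  ring

lemma hasDerivAt_basisPrimitive (γ s : ℝ) :
    HasDerivAt (basisPrimitive γ) ((1 - s) * (1 - 2 * s) - γ * (s * (1 - s))) s := by
  have hid := hasDerivAt_id s
  exact ((((hid.const_sub 1).pow 2).mul (((hid.const_mul 4).sub_const 1).add
    (((hid.const_mul 2).const_add 1).const_mul γ))).div_const 6).congr_deriv
    (by simp only [id_eq, Nat.cast_ofNat, Pi.pow_apply, Pi.add_apply]; ring)

lemma basisPrimitive_le {γ s x : ℝ} (hγ : γ ≤ 1) (hs0 : 0 ≤ s) (hs1 : s ≤ 1)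
    (hx : 1 ≤ x) :
    basisPrimitive γ s ≤ s * (1 - s) * (x - s) := by
  have h1s : 0 ≤ 1 - s := by linarith
  unfold basisPrimitive
  nlinarith [mul_nonneg (mul_nonneg hs0 h1s) (sub_nonneg.2 hx),
    mul_nonneg (sq_nonneg (1 - s)) (mul_nonneg (sub_nonneg.2 hγ) (by linarith : 0 ≤ 1 + 2 * s))]

lemma div_six_mul_rpow_le_integral_basis {γ x : ℝ} (hγ0 : 0 ≤ γ) (hγ1 : γ ≤ 1)
    (hx : 1 < x) :
    (1 - γ) * x ^ (-γ) / 6 ≤ ∫ s in (0:ℝ)..1, (1 - s) * (1 - 2 * s) * (x - s) ^ (-γ) := by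
  set Φ' : ℝ → ℝ := fun s => ((1 - s) * (1 - 2 * s) - γ * (s * (1 - s))) * (x - s) ^ (-γ)
    + basisPrimitive γ s * (γ * (x - s) ^ (-γ - 1))
  have hΦ : ∀ s ∈ Set.uIcc (0:ℝ) 1,
      HasDerivAt (fun s => basisPrimitive γ s * (x - s) ^ (-γ)) (Φ' s) s := fun s hs =>
    ((hasDerivAt_basisPrimitive γ s).mul
      (hasDerivAt_sub_rpow (-γ) (lt_of_mem_uIcc_zero_one hx hs))).congr_deriv
      (by simp only [Φ']; ring)
  have hΦ'int : IntervalIntegrable Φ' MeasureTheory.volume 0 1 := by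
    have := continuousOn_sub_rpow (-γ) hx
    have := continuousOn_sub_rpow (-γ - 1) hx
    have : Continuous (basisPrimitive γ) := by unfold basisPrimitive; fun_prop
    exact ContinuousOn.intervalIntegrable (by fun_prop)
  calc (1 - γ) * x ^ (-γ) / 6 = ∫ s in (0:ℝ)..1, Φ' s := by
        rw [integral_eq_sub_of_hasDerivAt hΦ hΦ'int]
        simp only [basisPrimitive, sub_self, sub_zero]
        ring
    _ ≤ _ := by
      refine integral_mono_on zero_le_one hΦ'int
        (intervalIntegrable_basis_mul_sub_rpow γ hx) fun s hs => ?_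
      have hxs : 0 < x - s := by linarith [hs.2]
      have hw : (x - s) ^ (-γ) = (x - s) ^ (-γ - 1) * (x - s) := by
        rw [rpow_sub_one hxs.ne', div_mul_cancel₀ _ hxs.ne']
      have hle := basisPrimitive_le hγ1 hs.1 hs.2 hx.le
      have hw_pos : 0 < (x - s) ^ (-γ - 1) := rpow_pos_of_pos hxs _
      simp only [Φ', hw]
      nlinarith [mul_le_mul_of_nonneg_left hle (mul_nonneg hγ0 hw_pos.le)]

lemma basisKernelMoment_one {γ : ℝ} (hγ : γ < 2) : basisKernelMoment γ 1 = (1 - γ) ^ 2 := by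
  rw [basisKernelMoment, sub_self, zero_rpow (by linarith), zero_rpow (by linarith)]
  simp only [one_rpow]
  ring

lemma le_basisKernelMoment {γ x : ℝ} (hγ0 : 0 ≤ γ) (hγ1 : γ ≤ 1) (hx : 1 ≤ x) :
    (1/6) * (3 - γ) * (2 - γ) * (1 - γ) ^ 2 * x ^ (-γ) ≤ basisKernelMoment γ x := by
  rcases hx.eq_or_lt with rfl | hx
  · rw [basisKernelMoment_one (by linarith), one_rpow]
    nlinarith [mul_nonneg (sq_nonneg (1 - γ)) (mul_nonneg hγ0 (by linarith : 0 ≤ 5 - γ))]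
  · have hc : 0 ≤ (3 - γ) * (2 - γ) * (1 - γ) :=
      mul_nonneg (mul_nonneg (by linarith) (by linarith)) (by linarith)
    calc (1/6) * (3 - γ) * (2 - γ) * (1 - γ) ^ 2 * x ^ (-γ)
        = (3 - γ) * (2 - γ) * (1 - γ) * ((1 - γ) * x ^ (-γ) / 6) := by ring
      _ ≤ (3 - γ) * (2 - γ) * (1 - γ) *
          ∫ s in (0:ℝ)..1, (1 - s) * (1 - 2 * s) * (x - s) ^ (-γ) :=
        mul_le_mul_of_nonneg_left (div_six_mul_rpow_le_integral_basis hγ0 hγ1 hx) hc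
      _ = basisKernelMoment γ x := integral_basis_mul_sub_rpow γ hx

theorem stmt_11_general (γ : ℝ) (hγ0 : 0 < γ) (hγ1 : γ < 1) (i : ℕ)
    (hi2 : 2 ≤ i) :
    (1/6) * (3 - γ) * (2 - γ) * (1 - γ) ^ 2 * ((i : ℝ) / 2) ^ (-γ)
      ≤ 4 * (((i : ℝ) / 2) ^ (3 - γ) - ((i : ℝ) / 2 - 1) ^ (3 - γ))
        - (3 - γ) * (3 * ((i : ℝ) / 2) ^ (2 - γ) + ((i : ℝ) / 2 - 1) ^ (2 - γ))
        + (3 - γ) * (2 - γ) * ((i : ℝ) / 2) ^ (1 - γ) := by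
  have hx : (1 : ℝ) ≤ i / 2 := by
    rw [le_div_iff₀ two_pos, one_mul]
    exact_mod_cast hi2
  exact le_basisKernelMoment hγ0.le hγ1.le hx

theorem stmt_11 (γ : ℝ) (hγ0 : 0 < γ) (hγ1 : γ < 1) (N i : ℕ) (hN : 2 ≤ N)
    (hi2 : 2 ≤ i) (hiN : i ≤ 2 * N - 1) :
    (1/6) * (3 - γ) * (2 - γ) * (1 - γ) ^ 2 * ((i : ℝ) / 2) ^ (-γ)
      ≤ 4 * (((i : ℝ) / 2) ^ (3 - γ) - ((i : ℝ) / 2 - 1) ^ (3 - γ))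
        - (3 - γ) * (3 * ((i : ℝ) / 2) ^ (2 - γ) + ((i : ℝ) / 2 - 1) ^ (2 - γ))
        + (3 - γ) * (2 - γ) * ((i : ℝ) / 2) ^ (1 - γ) :=
  stmt_11_general γ hγ0 hγ1 i hi2
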